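/- Let n ∈ ℕ, w : Fin n → ℕ, s = Σ_{i<n} w(i), and t ≤ s. Over the alphabet {0,1}, let block(v) = 0^v 1 0^{s−v}, let P be the concatenation of 2^n copies of block(t), let T be the concatenation, over x = 0, 1, …, 2^n − 1 in order, of block(x̄·w̄), and let P′ be obtained from P by flipping every symbol (0 ↔ 1). Then HD(P′, T) = (s+1)·2^n − HD(P, T), and consequently HD(P′, T) < (s+1)·2^n − 2^{n+1} + 1 if and only if there exist no x₁, …, xₙ ∈ {0,1} with Σ_{i<n} xᵢ·w(i) = t. -/
import Mathlib


/-- `block s v = 0^v 1 0^(s−v)`, a string of length `s + 1` over `{0,1}` (as `Bool`). -/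
def block (s v : ℕ) : List Bool :=
  List.replicate v false ++ [true] ++ List.replicate (s - v) false

/-- `x̄·w̄ = Σ_{i<n} (i-th binary digit of x)·w(i)`. -/
def dotw (n : ℕ) (w : Fin n → ℕ) (x : ℕ) : ℕ :=
  ∑ i : Fin n, if Nat.testBit x i.val then w i else 0

/-- Hamming distance between two strings (of equal length): the number of
indices at which they differ. -/
def HD (A B : List Bool) : ℕ :=
  ((Finset.range A.length).filter (fun i => A[i]? ≠ B[i]?)).card

lemma block_length {s v : ℕ} (hv : v ≤ s) : (block s v).length = s + 1 := by
  simp [block]; omega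

lemma block_get? {s v i : ℕ} (hv : v ≤ s) (hi : i < s + 1) :
    (block s v)[i]? = some (decide (i = v)) := by
  unfold block
  rcases lt_trichotomy i v with h | h | h
  · rw [List.getElem?_append_left (by simp; omega), List.getElem?_append_left (by simpa)]
    simp [List.getElem?_replicate_of_lt h]; omega
  · subst h
    rw [List.getElem?_append_left (by simp),
        List.getElem?_append_right (by simp)]
    simp
  · rw [List.getElem?_append_right (by simp; omega), List.getElem?_replicate,
        if_pos (by simp; omega)]
    simp; omega

lemma HD_block {s t v : ℕ} (ht : t ≤ s) (hv : v ≤ s) :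
    HD (block s t) (block s v) = if t = v then 0 else 2 := by
  unfold HD
  rw [block_length ht]
  have hfilt : ∀ i ∈ Finset.range (s+1),
      ((block s t)[i]? ≠ (block s v)[i]?) ↔ (i = t ∧ t ≠ v) ∨ (i = v ∧ t ≠ v) := by
    intro i hi
    rw [Finset.mem_range] at hi
    rw [block_get? ht hi, block_get? hv hi]
    simp only [ne_eq, Option.some.injEq, decide_eq_decide]
    constructor
    · intro h
      by_cases hit : i = t
      · left; exact ⟨hit, fun hq => h (by omega)⟩
      · right
        constructor
        · by_contra hiv; exact h (by omega)
        · intro hq; exact h (by omega)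
    · rintro (⟨rfl, hq⟩ | ⟨rfl, hq⟩) <;> omega
  rw [Finset.filter_congr hfilt]
  by_cases h : t = v
  · simp [h]
  · have : (Finset.range (s+1)).filter (fun i => (i = t ∧ t ≠ v) ∨ (i = v ∧ t ≠ v))
        = {t, v} := by
      ext i
      simp only [Finset.mem_filter, Finset.mem_range, Finset.mem_insert, Finset.mem_singleton]
      constructor
      · rintro ⟨_, (⟨rfl, _⟩ | ⟨rfl, _⟩)⟩ <;> simp
      · rintro (rfl | rfl) <;> exact ⟨by omega, by tauto⟩
    rw [this, if_neg h, Finset.card_insert_of_notMem (by simpa using h), Finset.card_singleton]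

lemma HD_append {a b A B : List Bool} (h : a.length = b.length) :
    HD (a ++ A) (b ++ B) = HD a b + HD A B := by
  unfold HD
  rw [List.length_append, Finset.range_add, Finset.filter_union,
      Finset.card_union_of_disjoint, Finset.filter_map, Finset.card_map]
  · congr 1
    · apply congrArg Finset.card
      apply Finset.filter_congr
      intro i hi
      rw [Finset.mem_range] at hi
      rw [List.getElem?_append_left hi, List.getElem?_append_left (h ▸ hi)]
    · apply congrArg Finset.card
      apply Finset.filter_congr
      intro i _
      simp only [Function.comp_apply, addLeftEmbedding_apply, eq_iff_iff]
      rw [List.getElem?_append_right (by omega), List.getElem?_append_right (by omega),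
          Nat.add_sub_cancel_left, h, Nat.add_sub_cancel_left]
  · exact Finset.disjoint_filter_filter (Finset.disjoint_range_addLeftEmbedding _ _)

lemma HD_flatten (l : List ℕ) (f g : ℕ → List Bool)
    (hlen : ∀ x, (f x).length = (g x).length) :
    HD (l.map f).flatten (l.map g).flatten = (l.map (fun x => HD (f x) (g x))).sum := by
  induction l with
  | nil => rfl
  | cons a l ih =>
      simp only [List.map_cons, List.flatten_cons, List.sum_cons]
      rw [HD_append (hlen a), ih]

lemma HD_le_length (A B : List Bool) : HD A B ≤ A.length := by
  unfold HD
  exact le_trans (Finset.card_filter_le _ _) (by simp)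

lemma HD_compl {A B : List Bool} (h : A.length = B.length) :
    HD (A.map (fun b => !b)) B = A.length - HD A B := by
  unfold HD
  rw [List.length_map]
  have key : (Finset.range A.length).filter (fun i => (A.map (fun b => !b))[i]? ≠ B[i]?)
      = (Finset.range A.length).filter (fun i => ¬ (A[i]? ≠ B[i]?)) := by
    apply Finset.filter_congr
    intro i hi
    rw [Finset.mem_range] at hi
    rw [List.getElem?_map, List.getElem?_eq_getElem hi, List.getElem?_eq_getElem (h ▸ hi)]
    simp only [Option.map_some, ne_eq, Option.some.injEq, not_not, eq_iff_iff]
    rcases Bool.eq_false_or_eq_true (A[i]) with h1 | h1 <;>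
      rcases Bool.eq_false_or_eq_true (B[i]'(h ▸ hi)) with h2 | h2 <;> rw [h1, h2] <;> simp
  rw [key]
  have := Finset.card_filter_add_card_filter_not
    (s := Finset.range A.length) (p := fun i => A[i]? ≠ B[i]?)
  simp only [Finset.card_range] at this
  omega

lemma bits_exists (n : ℕ) (b : Fin n → Bool) :
    ∃ m < 2 ^ n, ∀ j : Fin n, m.testBit j.val = b j := by
  induction n with
  | zero => exact ⟨0, by norm_num, fun j => j.elim0⟩
  | succ n ih =>
      obtain ⟨m, hm, hbit⟩ := ih (fun i => b i.succ)
      refine ⟨2 * m + (if b 0 then 1 else 0), ?_, ?_⟩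
      · have : 2 ^ (n + 1) = 2 * 2 ^ n := by ring
        split <;> omega
      · intro j
        induction j using Fin.cases with
        | zero =>
            simp only [Fin.val_zero, Nat.testBit_zero]
            split <;> rename_i hb <;> simp [hb, Nat.mul_add_mod, Nat.add_mul_mod_self_left]
        | succ i =>
            have : (i.succ : Fin (n+1)).val = i.val + 1 := rfl
            rw [this, Nat.testBit_add_one]
            have hdiv : (2 * m + (if b 0 then 1 else 0)) / 2 = m := by split <;> omega
            rw [hdiv]
            exact hbit i

lemma dotw_le (n : ℕ) (w : Fin n → ℕ) (x : ℕ) : dotw n w x ≤ ∑ i, w i :=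
  Finset.sum_le_sum fun i _ => by split <;> simp

lemma exists_iff (n : ℕ) (w : Fin n → ℕ) (t : ℕ) :
    (∃ x : Fin n → ℕ, (∀ i, x i = 0 ∨ x i = 1) ∧ ∑ i, x i * w i = t) ↔
      ∃ m < 2 ^ n, dotw n w m = t := by
  constructor
  · rintro ⟨x, hx, hsum⟩
    obtain ⟨m, hm, hbit⟩ := bits_exists n (fun i => decide (x i = 1))
    refine ⟨m, hm, ?_⟩
    rw [← hsum]
    unfold dotw
    apply Finset.sum_congr rfl
    intro i _
    rw [hbit i]
    rcases hx i with h | h <;> simp [h]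
  · rintro ⟨m, hm, hd⟩
    refine ⟨fun i => if m.testBit i.val then 1 else 0, fun i => by by_cases h : m.testBit i.val <;> simp [h], ?_⟩
    rw [← hd]
    unfold dotw
    apply Finset.sum_congr rfl
    intro i _
    by_cases h : m.testBit i.val <;> simp [h]

lemma list_sum_range (f : ℕ → ℕ) (k : ℕ) :
    ((List.range k).map f).sum = ∑ x ∈ Finset.range k, f x := by
  induction k with
  | zero => rfl
  | succ k ih =>
      rw [List.range_succ, List.map_append, List.sum_append, Finset.sum_range_succ, ih]
      simp

/-- Flipping every symbol of `P` complements the Hamming distance to `T`, so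
`HD(P′, T) < (s+1)·2^n − 2^{n+1} + 1` iff the Subset Sum instance `(w, t)` has a
negative answer. -/
theorem stmt_15 (n : ℕ) (w : Fin n → ℕ) (t : ℕ) (ht : t ≤ ∑ i, w i)
    (P T : List Bool)
    (hP : P = (List.replicate (2 ^ n) (block (∑ i, w i) t)).flatten)
    (hT : T = ((List.range (2 ^ n)).map fun x => block (∑ i, w i) (dotw n w x)).flatten) :
    HD (P.map (fun b => !b)) T = ((∑ i, w i) + 1) * 2 ^ n - HD P T ∧
      (HD (P.map (fun b => !b)) T < ((∑ i, w i) + 1) * 2 ^ n - 2 ^ (n + 1) + 1 ↔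
        ¬∃ x : Fin n → ℕ, (∀ i, x i = 0 ∨ x i = 1) ∧ ∑ i, x i * w i = t) := by
  have hdle : ∀ x, dotw n w x ≤ ∑ i, w i := dotw_le n w
  set s := ∑ i, w i with hs
  have hlenP : P.length = (s + 1) * 2 ^ n := by
    rw [hP, List.length_flatten, List.map_replicate, block_length ht, List.sum_replicate,
      smul_eq_mul, mul_comm]
  have hlenT : T.length = (s + 1) * 2 ^ n := by
    rw [hT, List.length_flatten, List.map_map]
    have : ((List.range (2 ^ n)).map
        (List.length ∘ fun x => block s (dotw n w x))).sum
        = ∑ x ∈ Finset.range (2 ^ n), (s + 1) := by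
      rw [list_sum_range]
      exact Finset.sum_congr rfl fun x _ => block_length (hdle x)
    rw [this, Finset.sum_const, Finset.card_range, smul_eq_mul, mul_comm]
  have conj1 : HD (P.map (fun b => !b)) T = (s + 1) * 2 ^ n - HD P T := by
    rw [HD_compl (hlenP.trans hlenT.symm), hlenP]
  refine ⟨conj1, ?_⟩
  set N := ((Finset.range (2 ^ n)).filter (fun x => dotw n w x = t)).card with hN
  set Nc := ((Finset.range (2 ^ n)).filter (fun x => ¬ dotw n w x = t)).card with hNc
  have hPmap : P = ((List.range (2 ^ n)).map fun _ => block s t).flatten := by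
    rw [hP]
    congr 1
    rw [List.map_const', List.length_range]
  have hPT : HD P T = 2 * Nc := by
    rw [hPmap, hT, HD_flatten _ _ _ (fun x => by rw [block_length ht, block_length (hdle x)]),
      list_sum_range]
    have : ∀ x ∈ Finset.range (2 ^ n),
        HD (block s t) (block s (dotw n w x)) = if dotw n w x = t then 0 else 2 := by
      intro x _
      rw [HD_block ht (hdle x)]
      exact if_congr eq_comm rfl rfl
    rw [Finset.sum_congr rfl this, Finset.sum_ite, Finset.sum_const, Finset.sum_const,
      smul_eq_mul, smul_eq_mul, mul_zero, zero_add, mul_comm]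
  have hsplit : N + Nc = 2 ^ n := by
    rw [hN, hNc, Finset.card_filter_add_card_filter_not, Finset.card_range]
  have hiff : (¬∃ x : Fin n → ℕ, (∀ i, x i = 0 ∨ x i = 1) ∧ ∑ i, x i * w i = t) ↔ N = 0 := by
    rw [exists_iff, hN, Finset.card_eq_zero, Finset.filter_eq_empty_iff]
    simp only [Finset.mem_range, not_exists, not_and]
  rw [conj1, hPT, hiff]
  have e1 : 2 ^ (n + 1) = 2 * 2 ^ n := by ring
  have e2 : 1 ≤ 2 ^ n := Nat.one_le_two_pow
  have e4 : s = 0 → N = 2 ^ n := by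
    intro h0
    rw [hN, Finset.filter_true_of_mem, Finset.card_range]
    intro x _
    have := hdle x
    omega
  have e5 : 1 ≤ s → 2 ^ n ≤ s * 2 ^ n := fun h => Nat.le_mul_of_pos_left _ h
  have e6 : (s + 1) * 2 ^ n = s * 2 ^ n + 2 ^ n := by ring
  omega
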